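/- arXiv:cs/0103019 — 5 statements merged into one kernel-verified Lean document; each statement's English description precedes it below -/
import Mathlib

section
/- If a 3CNF formula φ is satisfiable, then the game f(φ) has a deterministic joint strategy with expected payoff exactly 1. -/
open Finset

theorem sum_ite_eq_and_of {ι M : Type*} [Fintype ι] [DecidableEq ι] [AddCommMonoid M]
    (p : ι → Prop) [DecidablePred p] {j₀ : ι} (hj₀ : p j₀) (c : M) :
    ∑ j, (if j₀ = j ∧ p j then c else 0) = c := by
  simp_rw [ite_and, sum_ite_eq, if_pos (mem_univ j₀), if_pos hj₀]

/-- If a 3CNF formula φ (with n clauses, clause i having literals `C i j`)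
is satisfiable, then the game f(φ) has a deterministic joint strategy with
expected payoff exactly 1. -/
theorem stmt6 (n m : ℕ) (hn : 0 < n)
    (C : Fin n → Fin 3 → Fin m × Bool)
    (α : Fin m → Bool) (hα : ∀ i : Fin n, ∃ j : Fin 3, α (C i j).1 = (C i j).2) :
    ∃ (S1 : Fin m → Bool) (S2 : Fin n → Fin 3),
      (∑ i : Fin n, ∑ j : Fin 3, (1 / (3 * n : ℝ)) *
        (if S2 i = j ∧ S1 (C i j).1 = (C i j).2 then 3 else 0)) = 1 := by
  choose S2 hS2 using hα
  refine ⟨α, S2, ?_⟩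
  have hclause (i : Fin n) :
      ∑ j : Fin 3, (if S2 i = j ∧ α (C i j).1 = (C i j).2 then (3 : ℝ) else 0) = 3 :=
    sum_ite_eq_and_of (fun j => α (C i j).1 = (C i j).2) (hS2 i) 3
  simp_rw [← mul_sum, hclause, sum_const, card_univ, Fintype.card_fin, nsmul_eq_mul]
  field_simp
end

section
/- A 3CNF formula φ is satisfiable if and only if the game f(φ) admits a deterministic joint strategy (S_1, S_2) with expected payoff at least 1. -/
/-!
Player 2's strategy picks one literal per clause, and the expected payoff is exactly the fraction
of clauses whose picked literal is made true by player 1's assignment. Since that fraction is at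
most 1, payoff at least 1 means every picked literal is true, and a choice of a true literal in
every clause is precisely a satisfying assignment together with a witness for each clause.
-/

open Finset

lemma sum_sum_ite_eq_and_eq_card_filter_div {ι κ : Type*} [Fintype ι] [Fintype κ]
    [DecidableEq κ] (sat : ι → κ → Prop) [∀ i j, Decidable (sat i j)] (pick : ι → κ) {c : ℝ}
    (hc : c ≠ 0) (N : ℝ) :
    ∑ i, ∑ j, 1 / (c * N) * (if pick i = j ∧ sat i j then c else 0) =
      #{i | sat i (pick i)} / N := by
  simp only [ite_and, sum_ite_eq, mem_univ, if_true, ← mul_sum]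
  rw [sum_ite, sum_const_zero, add_zero, sum_const, nsmul_eq_mul]
  field_simp

lemma one_le_card_filter_div_card_iff {ι : Type*} [Fintype ι] [Nonempty ι] (p : ι → Prop)
    [DecidablePred p] : 1 ≤ (#{i | p i} : ℝ) / Fintype.card ι ↔ ∀ i, p i := by
  rw [← nnratCast_dens, ← NNRat.cast_one, NNRat.cast_le, dens_le_one.ge_iff_eq, dens_eq_one,
    filter_eq_self]
  simp only [mem_univ, true_implies]

/-- A 3CNF formula φ is satisfiable if and only if the game f(φ) admits a
deterministic joint strategy (S1, S2) with expected payoff at least 1. -/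
theorem stmt8 (n m : ℕ) (hn : 0 < n)
    (C : Fin n → Fin 3 → Fin m × Bool) :
    (∃ α : Fin m → Bool, ∀ i : Fin n, ∃ j : Fin 3, α (C i j).1 = (C i j).2) ↔
      (∃ (S1 : Fin m → Bool) (S2 : Fin n → Fin 3),
        1 ≤ ∑ i : Fin n, ∑ j : Fin 3, (1 / (3 * n : ℝ)) *
          (if S2 i = j ∧ S1 (C i j).1 = (C i j).2 then 3 else 0)) := by
  have : Nonempty (Fin n) := ⟨⟨0, hn⟩⟩
  have payoff_ge_one_iff (S1 : Fin m → Bool) (S2 : Fin n → Fin 3) :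
      1 ≤ ∑ i : Fin n, ∑ j : Fin 3, (1 / (3 * n : ℝ)) *
          (if S2 i = j ∧ S1 (C i j).1 = (C i j).2 then 3 else 0) ↔
        ∀ i, S1 (C i (S2 i)).1 = (C i (S2 i)).2 := by
    rw [sum_sum_ite_eq_and_eq_card_filter_div (fun i j => S1 (C i j).1 = (C i j).2) S2
      three_ne_zero]
    simpa using one_le_card_filter_div_card_iff fun i => S1 (C i (S2 i)).1 = (C i (S2 i)).2
  simp only [payoff_ge_one_iff]
  exact exists_congr fun α => Classical.skolem
end

section
/- In the game f(φ), if some clause of φ is not satisfied by the truth assignment S_1 (i.e., all three of its literals are false under S_1), then for every strategy S_2 of player 2 the expected payoff of (S_1, S_2) is at most 1 − 1/n, where n is the number of clauses. -/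
open Finset

lemma sum_ite_eq_and_le {ι M : Type*} [Fintype ι] [DecidableEq ι] [AddCommMonoid M]
    [PartialOrder M] [IsOrderedAddMonoid M] (k : ι) (p : ι → Prop) [DecidablePred p]
    (a : M) (ha : 0 ≤ a) :
    ∑ j, (if k = j ∧ p j then a else 0) ≤ a := by
  simp only [ite_and, sum_ite_eq, mem_univ, if_true]
  split_ifs
  exacts [le_rfl, ha]

lemma sum_le_card_pred_mul_of_nonpos {ι : Type*} [Fintype ι] (f : ι → ℝ) (b : ℝ)
    (hf : ∀ i, f i ≤ b) (i₀ : ι) (hi₀ : f i₀ ≤ 0) :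
    ∑ i, f i ≤ (Fintype.card ι - 1) * b := by
  classical
  have hrest : ∑ i ∈ univ.erase i₀, f i ≤ (Fintype.card ι - 1) * b := by
    have := sum_le_card_nsmul (univ.erase i₀) f b fun i _ => hf i
    rwa [card_erase_of_mem (mem_univ i₀), nsmul_eq_mul, card_univ,
      Nat.cast_pred (Fintype.card_pos_iff.mpr ⟨i₀⟩)] at this
  rw [← add_sum_erase _ _ (mem_univ i₀)]
  linarith

theorem stmt13_general (n m : ℕ)
    (C : Fin n → Fin 3 → Fin m × Bool)
    (S1 : Fin m → Bool)
    (i0 : Fin n) (hbad : ∀ j : Fin 3, S1 (C i0 j).1 ≠ (C i0 j).2) :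
    ∀ S2 : Fin n → Fin 3,
      (∑ i : Fin n, ∑ j : Fin 3, (1 / (3 * n : ℝ)) *
          (if S2 i = j ∧ S1 (C i j).1 = (C i j).2 then 3 else 0))
        ≤ 1 - 1 / n := by
  intro S2
  have hn : (n : ℝ) ≠ 0 := by exact_mod_cast i0.pos.ne'
  have hclause : ∀ i, ∑ j : Fin 3, (1 / (3 * n : ℝ)) *
      (if S2 i = j ∧ S1 (C i j).1 = (C i j).2 then 3 else 0) ≤ 1 / n := fun i =>
    calc _ ≤ 1 / (3 * n : ℝ) * 3 := by
          rw [← mul_sum]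
          gcongr
          exact sum_ite_eq_and_le _ _ _ (by norm_num)
      _ = 1 / n := by field_simp
  have hunsat : ∑ j : Fin 3, (1 / (3 * n : ℝ)) *
      (if S2 i0 = j ∧ S1 (C i0 j).1 = (C i0 j).2 then 3 else 0) ≤ 0 := by
    simp [hbad]
  calc _ ≤ (n - 1) * (1 / n : ℝ) := by
        simpa using sum_le_card_pred_mul_of_nonpos _ _ hclause i0 hunsat
    _ = 1 - 1 / n := by field_simp

/-- In f(φ), if some clause of φ is unsatisfied by the truth assignment S1
(all three of its literals are false under S1), then for every strategy S2 of
player 2 the expected payoff of (S1,S2) is at most 1 − 1/n. -/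
theorem stmt13 (n m : ℕ) (hn : 0 < n)
    (C : Fin n → Fin 3 → Fin m × Bool)
    (S1 : Fin m → Bool)
    (i0 : Fin n) (hbad : ∀ j : Fin 3, S1 (C i0 j).1 ≠ (C i0 j).2) :
    ∀ S2 : Fin n → Fin 3,
      (∑ i : Fin n, ∑ j : Fin 3, (1 / (3 * n : ℝ)) *
          (if S2 i = j ∧ S1 (C i j).1 = (C i j).2 then 3 else 0))
        ≤ 1 - 1 / n :=
  stmt13_general n m C S1 i0 hbad
end

section
/- In the game f(φ), the expected payoff of any joint strategy (S_1, S_2) equals (1/n) times the number of clause indices i such that literal ℓ_{i,S_2(C_i)} is true under the assignment S_1; consequently the maximum expected payoff over all joint strategies equals (1/n) times the maximum over truth assignments α of the number of clauses of φ containing some literal true under α. -/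
/-- In f(φ): (a) the expected payoff of any joint strategy (S1,S2) equals 1/n
times the number of clauses i whose literal chosen by player 2 is true under
S1; (b) the maximum expected payoff over all joint strategies equals 1/n times
the maximum over truth assignments α of the number of clauses containing some
literal true under α. -/
theorem stmt18 (n m : ℕ) (hn : 0 < n)
    (C : Fin n → Fin 3 → Fin m × Bool) :
    (∀ (S1 : Fin m → Bool) (S2 : Fin n → Fin 3),
      (∑ i : Fin n, ∑ j : Fin 3, (1 / (3 * n : ℝ)) *
          (if S2 i = j ∧ S1 (C i j).1 = (C i j).2 then 3 else 0))
        = (1 / n : ℝ) *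
            ((Finset.univ.filter
              (fun i : Fin n => S1 (C i (S2 i)).1 = (C i (S2 i)).2)).card : ℝ)) ∧
    (Finset.univ.sup' Finset.univ_nonempty
        (fun SS : (Fin m → Bool) × (Fin n → Fin 3) =>
          ∑ i : Fin n, ∑ j : Fin 3, (1 / (3 * n : ℝ)) *
            (if SS.2 i = j ∧ SS.1 (C i j).1 = (C i j).2 then 3 else 0))
      = (1 / n : ℝ) *
          Finset.univ.sup' Finset.univ_nonempty
            (fun α : Fin m → Bool =>
              ((Finset.univ.filter
                (fun i : Fin n => ∃ j : Fin 3, α (C i j).1 = (C i j).2)).card : ℝ))) := by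
  have hn' : (n : ℝ) ≠ 0 := Nat.cast_ne_zero.mpr hn.ne'
  have key : ∀ (S1 : Fin m → Bool) (S2 : Fin n → Fin 3),
      (∑ i : Fin n, ∑ j : Fin 3, (1 / (3 * n : ℝ)) *
          (if S2 i = j ∧ S1 (C i j).1 = (C i j).2 then 3 else 0))
        = (1 / n : ℝ) * ((Finset.univ.filter
              (fun i : Fin n => S1 (C i (S2 i)).1 = (C i (S2 i)).2)).card : ℝ) := by
    intro S1 S2
    have h1 : ∀ i : Fin n, (∑ j : Fin 3, (1 / (3 * n : ℝ)) *
        (if S2 i = j ∧ S1 (C i j).1 = (C i j).2 then 3 else 0))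
        = if S1 (C i (S2 i)).1 = (C i (S2 i)).2 then (1 / n : ℝ) else 0 := by
      intro i
      rw [Finset.sum_eq_single (S2 i)]
      · by_cases h : S1 (C i (S2 i)).1 = (C i (S2 i)).2
        · rw [if_pos ⟨rfl, h⟩, if_pos h]; field_simp
        · rw [if_neg (fun hc => h hc.2), if_neg h, mul_zero]
      · intro b _ hb
        simp [Ne.symm hb]
      · simp
    rw [Finset.sum_congr rfl (fun i _ => h1 i), Finset.sum_ite, Finset.sum_const,
      Finset.sum_const]
    simp [mul_comm]
  refine ⟨key, le_antisymm ?_ ?_⟩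
  · apply Finset.sup'_le
    intro SS _
    rw [key SS.1 SS.2]
    have hle : ((Finset.univ.filter
          (fun i : Fin n => SS.1 (C i (SS.2 i)).1 = (C i (SS.2 i)).2)).card : ℝ)
        ≤ Finset.univ.sup' Finset.univ_nonempty
            (fun α : Fin m → Bool =>
              ((Finset.univ.filter
                (fun i : Fin n => ∃ j : Fin 3, α (C i j).1 = (C i j).2)).card : ℝ)) := by
      refine le_trans ?_ (Finset.le_sup' _ (Finset.mem_univ SS.1))
      have := Finset.card_le_card (s := Finset.univ.filter
          (fun i : Fin n => SS.1 (C i (SS.2 i)).1 = (C i (SS.2 i)).2))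
          (t := Finset.univ.filter
            (fun i : Fin n => ∃ j : Fin 3, SS.1 (C i j).1 = (C i j).2))
          (fun i hi => by
            simp only [Finset.mem_filter] at *
            exact ⟨hi.1, ⟨SS.2 i, hi.2⟩⟩)
      exact_mod_cast this
    have h0 : (0:ℝ) ≤ 1 / n := by positivity
    exact mul_le_mul_of_nonneg_left hle h0
  · obtain ⟨α₀, -, hα₀⟩ := Finset.exists_mem_eq_sup' Finset.univ_nonempty
      (fun α : Fin m → Bool => ((Finset.univ.filter
        (fun i : Fin n => ∃ j : Fin 3, α (C i j).1 = (C i j).2)).card : ℝ))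
    rw [hα₀]
    classical
    set S2 : Fin n → Fin 3 := fun i =>
      if h : ∃ j : Fin 3, α₀ (C i j).1 = (C i j).2 then h.choose else 0 with hS2
    have hfilter : (Finset.univ.filter
          (fun i : Fin n => α₀ (C i (S2 i)).1 = (C i (S2 i)).2))
        = Finset.univ.filter
            (fun i : Fin n => ∃ j : Fin 3, α₀ (C i j).1 = (C i j).2) := by
      apply Finset.filter_congr
      intro i _
      constructor
      · intro h; exact ⟨S2 i, h⟩
      · intro h
        simp only [hS2, dif_pos h]
        exact h.choose_spec
    have hk := key α₀ S2
    rw [hfilter] at hk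
    rw [← hk]
    exact Finset.le_sup'
      (f := fun SS : (Fin m → Bool) × (Fin n → Fin 3) =>
        ∑ i : Fin n, ∑ j : Fin 3, (1 / (3 * n : ℝ)) *
          (if SS.2 i = j ∧ SS.1 (C i j).1 = (C i j).2 then 3 else 0))
      (Finset.mem_univ (α₀, S2))
end

section
/- MAX-version hardness transfer: if φ is a 3CNF formula with n clauses such that every truth assignment satisfies at most n−1 clauses, then every joint strategy in f(φ) has expected payoff at most 1 − 1/n; hence distinguishing maximum expected payoff 1 from ≤ 1 − 1/n in f(φ) is equivalent to deciding satisfiability of φ. -/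
/-!
Strategy `S2` picks one literal of each clause, and clause `i` pays `1/n` exactly when the
assignment `S1` makes that literal true. So the payoff is at most `1/n` times the number of
clauses satisfied by `S1`, which is at most `(n - 1)/n`.
-/

open Finset

lemma sum_mul_ite_eq_and {ι : Type*} [Fintype ι] [DecidableEq ι] (s : ι) (p : ι → Prop)
    [DecidablePred p] (w c : ℝ) :
    ∑ j, w * (if s = j ∧ p j then c else 0) = if p s then w * c else 0 := by
  simp_rw [ite_and, mul_ite, mul_zero, sum_ite_eq, mem_univ, if_true]

lemma sum_ite_const_eq_card_filter_div {ι : Type*} [Fintype ι] (p : ι → Prop)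
    [DecidablePred p] (n : ℝ) :
    ∑ i, (if p i then 1 / n else 0) = #(univ.filter p) / n := by
  rw [sum_ite, sum_const, sum_const_zero, add_zero, nsmul_eq_mul, mul_one_div]

lemma natCast_div_le_one_sub_one_div {k n : ℕ} (hk : k ≤ n - 1) :
    (k : ℝ) / n ≤ 1 - 1 / n := by
  rcases Nat.eq_zero_or_pos n with rfl | hn
  · simp
  · rw [one_sub_div (by positivity), div_le_div_iff_of_pos_right (by positivity),
      ← Nat.cast_pred hn]
    exact_mod_cast hk

theorem stmt19_general (n m : ℕ)
    (C : Fin n → Fin 3 → Fin m × Bool)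
    (hφ : ∀ α : Fin m → Bool,
      (Finset.univ.filter
        (fun i : Fin n => ∃ j : Fin 3, α (C i j).1 = (C i j).2)).card ≤ n - 1) :
    ∀ (S1 : Fin m → Bool) (S2 : Fin n → Fin 3),
      (∑ i : Fin n, ∑ j : Fin 3, (1 / (3 * n : ℝ)) *
          (if S2 i = j ∧ S1 (C i j).1 = (C i j).2 then 3 else 0))
        ≤ 1 - 1 / n := by
  intro S1 S2
  have hweight : 1 / (3 * n : ℝ) * 3 = 1 / n := by field_simp
  calc (∑ i : Fin n, ∑ j : Fin 3, (1 / (3 * n : ℝ)) *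
          (if S2 i = j ∧ S1 (C i j).1 = (C i j).2 then 3 else 0))
      = ∑ i, if S1 (C i (S2 i)).1 = (C i (S2 i)).2 then 1 / (n : ℝ) else 0 := by
        simp_rw [sum_mul_ite_eq_and, hweight]
    _ = #(univ.filter fun i => S1 (C i (S2 i)).1 = (C i (S2 i)).2) / (n : ℝ) :=
        sum_ite_const_eq_card_filter_div _ _
    _ ≤ #(univ.filter fun i => ∃ j, S1 (C i j).1 = (C i j).2) / (n : ℝ) := by
        gcongr with i
        exact fun h => ⟨S2 i, h⟩
    _ ≤ 1 - 1 / n := natCast_div_le_one_sub_one_div (hφ S1)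

/-- Hardness transfer for the MAX version: if every truth assignment satisfies
at most n−1 of the n clauses of φ, then every joint strategy in f(φ) has
expected payoff at most 1 − 1/n. -/
theorem stmt19 (n m : ℕ) (hn : 0 < n)
    (C : Fin n → Fin 3 → Fin m × Bool)
    (hφ : ∀ α : Fin m → Bool,
      (Finset.univ.filter
        (fun i : Fin n => ∃ j : Fin 3, α (C i j).1 = (C i j).2)).card ≤ n - 1) :
    ∀ (S1 : Fin m → Bool) (S2 : Fin n → Fin 3),
      (∑ i : Fin n, ∑ j : Fin 3, (1 / (3 * n : ℝ)) *
          (if S2 i = j ∧ S1 (C i j).1 = (C i j).2 then 3 else 0))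
        ≤ 1 - 1 / n :=
  stmt19_general n m C hφ
end
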